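/- arXiv:2309.13486 — 3 statements merged into one kernel-verified Lean document; each statement's English description precedes it below -/
import Mathlib

section
/- In the probabilistic densification step after s insertions, the probability that a fixed pixel x* is selected equals ∑_{β=1}^{α} (1/β) · C(N_eq − 1, β − 1) · C(N_gt, α − β) / C(N − s, α), where N_eq is the number of free pixels with energy equal to E(x*) and N_gt the number with strictly greater energy. -/
/-!
Group the candidate sets `S ∋ x*` by `β = #(S ∩ Eq)`, where `Eq` is the set of free pixels of
energy `E x*`; on each group `x*` is selected with probability `1 / β`. Removing `x*`, such an
`S` is a choice of `β - 1` further pixels of `Eq \ {x*}` and of the remaining `α - β` pixels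
among those of strictly greater energy, which are all the other free pixels since `x*` is a
minimiser. This gives `C(N_eq - 1, β - 1) · C(N_gt, α - β)` sets in the group.
-/

open Finset

namespace Finset

variable {ι : Type*} [DecidableEq ι]

theorem filter_union_of_subset_filter_of_subset_filter_not {s u v : Finset ι} {p : ι → Prop}
    [DecidablePred p] (hu : u ⊆ s.filter p) (hv : v ⊆ s.filter (¬p ·)) :
    (u ∪ v).filter p = u ∧ (u ∪ v).filter (¬p ·) = v := by
  have hup : ∀ x ∈ u, p x := fun x hx => (mem_filter.1 (hu hx)).2
  have hvp : ∀ x ∈ v, ¬p x := fun x hx => (mem_filter.1 (hv hx)).2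
  refine ⟨?_, ?_⟩
  · rw [filter_union, filter_true_of_mem hup, filter_false_of_mem hvp, union_empty]
  · rw [filter_union, filter_false_of_mem (fun x hx => not_not.2 (hup x hx)),
      filter_true_of_mem hvp, empty_union]

theorem card_filter_powersetCard_card_filter_eq (s : Finset ι) (p : ι → Prop) [DecidablePred p]
    {k j : ℕ} (hjk : j ≤ k) :
    #{t ∈ s.powersetCard k | #(t.filter p) = j} =
      (#(s.filter p)).choose j * (#(s.filter (¬p ·))).choose (k - j) := by
  rw [← card_powersetCard, ← card_powersetCard, ← card_product]
  refine card_nbij' (fun t => (t.filter p, t.filter (¬p ·))) (fun uv => uv.1 ∪ uv.2)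
    ?_ ?_ ?_ ?_
  · intro t ht
    simp only [coe_filter, mem_powersetCard, Set.mem_ofPred_eq, mem_coe, mem_product] at ht ⊢
    obtain ⟨⟨hts, htk⟩, htj⟩ := ht
    refine ⟨⟨filter_subset_filter _ hts, htj⟩, filter_subset_filter _ hts, ?_⟩
    have := card_filter_add_card_filter_not (s := t) p
    omega
  · rintro ⟨u, v⟩ huv
    simp only [coe_filter, mem_powersetCard, Set.mem_ofPred_eq, mem_coe, mem_product] at huv ⊢
    obtain ⟨⟨hus, huj⟩, hvs, hvk⟩ := huv
    have hdisj : Disjoint u v := disjoint_filter_filter_not s s p |>.mono hus hvs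
    refine ⟨⟨union_subset (hus.trans (filter_subset _ _)) (hvs.trans (filter_subset _ _)), ?_⟩,
      by rw [(filter_union_of_subset_filter_of_subset_filter_not hus hvs).1, huj]⟩
    rw [card_union_of_disjoint hdisj]
    omega
  · intro t _
    exact filter_union_filter_not_eq p t
  · rintro ⟨u, v⟩ huv
    simp only [coe_product, mem_coe, Set.mem_prod, mem_powersetCard] at huv
    exact Prod.ext_iff.2 (filter_union_of_subset_filter_of_subset_filter_not huv.1.1 huv.2.1)

theorem card_filter_powersetCard_succ_mem (s : Finset ι) {a : ι} (ha : a ∈ s)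
    (q : Finset ι → Prop) [DecidablePred q] (k : ℕ) :
    #{t ∈ s.powersetCard (k + 1) | a ∈ t ∧ q t} =
      #{t ∈ (s.erase a).powersetCard k | q (insert a t)} := by
  refine card_nbij' (fun t => t.erase a) (insert a) ?_ ?_ ?_ ?_
  · intro t ht
    simp only [coe_filter, mem_powersetCard, Set.mem_ofPred_eq] at ht ⊢
    obtain ⟨⟨hts, htk⟩, hat, hq⟩ := ht
    refine ⟨⟨erase_subset_erase a hts, by rw [card_erase_of_mem hat, htk]; rfl⟩, ?_⟩
    rwa [insert_erase hat]
  · intro t ht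
    simp only [coe_filter, mem_powersetCard, Set.mem_ofPred_eq] at ht ⊢
    obtain ⟨⟨hts, htk⟩, hq⟩ := ht
    have hat : a ∉ t := fun h => notMem_erase a s (hts h)
    refine ⟨⟨insert_subset ha (hts.trans (erase_subset a s)), ?_⟩, mem_insert_self a t, hq⟩
    rw [card_insert_of_notMem hat, htk]
  · intro t ht
    exact insert_erase (mem_filter.1 ht).2.1
  · intro t ht
    exact erase_insert fun h => notMem_erase a s ((mem_powersetCard.1 (mem_filter.1 ht).1).1 h)

theorem card_filter_powersetCard_mem_card_filter_eq (s : Finset ι) (p : ι → Prop)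
    [DecidablePred p] {a : ι} (ha : a ∈ s) (hpa : p a) {k j : ℕ} (hjk : j ≤ k) :
    #{t ∈ s.powersetCard (k + 1) | a ∈ t ∧ #(t.filter p) = j + 1} =
      (#(s.filter p) - 1).choose j * (#(s.filter (¬p ·))).choose (k - j) := by
  have hcard : ∀ t ∈ (s.erase a).powersetCard k,
      #((insert a t).filter p) = j + 1 ↔ #(t.filter p) = j := by
    intro t ht
    have hat : a ∉ t.filter p := fun h =>
      notMem_erase a s ((mem_powersetCard.1 ht).1 (mem_filter.1 h).1)
    rw [filter_insert, if_pos hpa, card_insert_of_notMem hat, Nat.add_right_cancel_iff]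
  rw [card_filter_powersetCard_succ_mem s ha, filter_congr hcard,
    card_filter_powersetCard_card_filter_eq _ _ hjk, filter_erase, filter_erase,
    card_erase_of_mem (mem_filter.2 ⟨ha, hpa⟩), erase_eq_of_notMem (by simp [hpa])]

end Finset

theorem densification_selection_probability_general
    (N s α : ℕ)
    (F : Finset (Fin N))
    (E : Fin N → ℝ) (xstar : Fin N) (hx : xstar ∈ F)
    (hmin : ∀ x ∈ F, E xstar ≤ E x)
    (Neq Ngt : ℕ)
    (hNeq : Neq = (F.filter (fun x => E x = E xstar)).card)
    (hNgt : Ngt = (F.filter (fun x => E xstar < E x)).card) :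
    (∑ S ∈ F.powersetCard α,
        (if xstar ∈ S then
            (1 : ℝ) / ((S.filter (fun x => E x = E xstar)).card : ℝ)
          else 0)) / (((N - s).choose α : ℕ) : ℝ)
      = ∑ β ∈ Finset.Icc 1 α,
          (1 / (β : ℝ)) * ((Neq - 1).choose (β - 1) : ℝ) * (Ngt.choose (α - β) : ℝ)
            / (((N - s).choose α : ℕ) : ℝ) := by
  set p : Fin N → Prop := fun x => E x = E xstar
  have hgt : F.filter (¬p ·) = F.filter (fun x => E xstar < E x) :=
    filter_congr fun x hxF => ((hmin x hxF).lt_iff_ne').symm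
  have hmaps : ∀ S ∈ (F.powersetCard α).filter (xstar ∈ ·), #(S.filter p) ∈ Icc 1 α := by
    intro S hS
    obtain ⟨hSα, hxS⟩ := mem_filter.1 hS
    exact mem_Icc.2 ⟨card_pos.2 ⟨xstar, mem_filter.2 ⟨hxS, rfl⟩⟩,
      (card_filter_le S p).trans (mem_powersetCard.1 hSα).2.le⟩
  rw [← sum_div, ← sum_filter, ← sum_fiberwise_of_maps_to' hmaps (fun β : ℕ => 1 / (β : ℝ))]
  congr 1
  refine sum_congr rfl fun β hβ => ?_
  obtain ⟨hβ1, hβα⟩ := mem_Icc.1 hβ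
  obtain ⟨j, rfl⟩ : ∃ j, β = j + 1 := ⟨β - 1, by omega⟩
  obtain ⟨k, rfl⟩ : ∃ k, α = k + 1 := ⟨α - 1, by omega⟩
  rw [sum_const, nsmul_eq_mul, filter_filter,
    card_filter_powersetCard_mem_card_filter_eq F p hx rfl (by omega), hgt, ← hNeq, ← hNgt]
  push_cast
  ring

/-- Probabilistic densification selection probability.  After `s` insertions the
free pixels form the finset `F` with `F.card = N - s`.  A candidate set of `α`
distinct pixels is drawn uniformly among the `(N-s).choose α` subsets of `F` of
cardinality `α`; among the candidates, those minimizing the energy `E` form the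
set of minimizers, and the selected pixel is chosen uniformly from it.  The
probability that the fixed minimal-energy pixel `x*` is selected equals the
stated sum. -/
theorem densification_selection_probability
    (N s α : ℕ) (hs : s < N) (hα1 : 1 ≤ α) (hα2 : α ≤ N - s)
    (F : Finset (Fin N)) (hF : F.card = N - s)
    (E : Fin N → ℝ) (xstar : Fin N) (hx : xstar ∈ F)
    (hmin : ∀ x ∈ F, E xstar ≤ E x)
    (Neq Ngt : ℕ)
    (hNeq : Neq = (F.filter (fun x => E x = E xstar)).card)
    (hNgt : Ngt = (F.filter (fun x => E xstar < E x)).card) :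
    (∑ S ∈ F.powersetCard α,
        (if xstar ∈ S then
            (1 : ℝ) / ((S.filter (fun x => E x = E xstar)).card : ℝ)
          else 0)) / (((N - s).choose α : ℕ) : ℝ)
      = ∑ β ∈ Finset.Icc 1 α,
          (1 / (β : ℝ)) * ((Neq - 1).choose (β - 1) : ℝ) * (Ngt.choose (α - β) : ℝ)
            / (((N - s).choose α : ℕ) : ℝ) :=
  densification_selection_probability_general N s α F E xstar hx hmin Neq Ngt hNeq hNgt
end

section
/- Let M = C + (I − C)L where C = diag(c) with c ∈ {0,1}^N, c ≠ 0, and L is the symmetric positive semidefinite graph Laplacian of a connected graph on N vertices (kernel spanned by the constant vector). Then M is invertible. -/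
open Matrix

/-- The inpainting matrix `M = C + (I - C) L` is invertible whenever the mask is
nonzero and `L` is the symmetric positive semidefinite Laplacian of a connected
graph (kernel spanned by the constant vector). -/
theorem inpainting_matrix_invertible (N : ℕ)
    (L : Matrix (Fin N) (Fin N) ℝ)
    (hsymm : L.IsSymm)
    (hpsd : ∀ x : Fin N → ℝ, 0 ≤ x ⬝ᵥ (L *ᵥ x))
    (hker : ∀ x : Fin N → ℝ, L *ᵥ x = 0 ↔ ∃ t : ℝ, x = fun _ => t)
    (c : Fin N → ℝ) (hc01 : ∀ i, c i = 0 ∨ c i = 1) (hc : c ≠ 0)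
    (C : Matrix (Fin N) (Fin N) ℝ) (hC : C = Matrix.diagonal c) :
    IsUnit (C + (1 - C) * L) := by
  rw [Matrix.isUnit_iff_isUnit_det, isUnit_iff_ne_zero]
  intro hdet
  obtain ⟨x, hx0, hx⟩ := (Matrix.exists_mulVec_eq_zero_iff).mpr hdet
  -- componentwise equation
  have hcomp : ∀ i, c i * x i + (1 - c i) * (L *ᵥ x) i = 0 := by
    intro i
    have h2 : c i * x i + ((L *ᵥ x) i - c i * (L *ᵥ x) i) = 0 := by
      simpa [hC, Matrix.add_mulVec, Matrix.sub_mulVec, Matrix.mulVec_diagonal,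
        ← Matrix.mulVec_mulVec, Matrix.one_mulVec, Pi.add_apply, Pi.sub_apply]
        using congrFun hx i
    ring_nf at h2 ⊢
    linarith
  -- at each i, either x i = 0 (c i = 1) or (L x) i = 0 (c i = 0)
  have hcases : ∀ i, (c i = 1 ∧ x i = 0) ∨ (c i = 0 ∧ (L *ᵥ x) i = 0) := by
    intro i
    rcases hc01 i with h | h
    · right
      refine ⟨h, ?_⟩
      have := hcomp i
      rw [h] at this
      linarith
    · left
      refine ⟨h, ?_⟩
      have := hcomp i
      rw [h] at this
      linarith
  have hquad : x ⬝ᵥ (L *ᵥ x) = 0 := by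
    unfold dotProduct
    apply Finset.sum_eq_zero
    intro i _
    rcases hcases i with ⟨_, hxi⟩ | ⟨_, hLi⟩
    · rw [hxi, zero_mul]
    · rw [hLi, mul_zero]
  have hpsdM : L.PosSemidef := by
    constructor
    · exact hsymm
    · intro x
      simpa [dotProduct, mulVec, Finsupp.sum_fintype, Finset.mul_sum, mul_assoc] using hpsd x
  have hLx : L *ᵥ x = 0 := by
    have := (hpsdM.dotProduct_mulVec_zero_iff x).mp (by simpa using hquad)
    exact this
  obtain ⟨t, ht⟩ := (hker x).mp hLx
  -- get an index where c i = 1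
  have : ∃ i, c i = 1 := by
    by_contra h
    push_neg at h
    apply hc
    funext i
    rcases hc01 i with h0 | h1
    · exact h0
    · exact absurd h1 (h i)
  obtain ⟨i, hi⟩ := this
  rcases hcases i with ⟨_, hxi⟩ | ⟨h0, _⟩
  · apply hx0
    rw [ht] at hxi ⊢
    funext j
    exact hxi
  · rw [hi] at h0; norm_num at h0
end

section
/- For the inpainting matrix M = C + (I − C)L with L a connected graph Laplacian and c ≠ 0, the reconstruction u = M^{-1} C f satisfies a maximum–minimum principle: min_{k : c_k = 1} f_k ≤ u_i ≤ max_{k : c_k = 1} f_k for all i. -/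
open Matrix

lemma inpainting_aux (N : ℕ)
    (L : Matrix (Fin N) (Fin N) ℝ)
    (hsymm : L.IsSymm)
    (hpsd : ∀ x : Fin N → ℝ, 0 ≤ x ⬝ᵥ (L *ᵥ x))
    (hoffdiag : ∀ i j, i ≠ j → L i j ≤ 0)
    (hker : ∀ x : Fin N → ℝ, L *ᵥ x = 0 ↔ ∃ t : ℝ, x = fun _ => t)
    (c : Fin N → ℝ) (hc01 : ∀ i, c i = 0 ∨ c i = 1)
    (f u : Fin N → ℝ)
    (hmask : ∀ i, c i = 1 → u i = f i)
    (hharm : ∀ i, c i = 0 → (L *ᵥ u) i = 0)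
    (K : Finset (Fin N)) (hK : K = Finset.univ.filter (fun k => c k = 1))
    (hKne : K.Nonempty) :
    ∀ i, u i ≤ K.sup' hKne f := by
  set b := K.sup' hKne f with hb
  set g : Fin N → ℝ := fun i => max (u i - b) 0 with hgdef
  have hgnn : ∀ i, 0 ≤ g i := fun i => le_max_right _ _
  have hg0 : ∀ k, c k = 1 → g k = 0 := by
    intro k hk
    have hkK : k ∈ K := by simp [hK, hk]
    have : u k ≤ b := by rw [hmask k hk]; exact Finset.le_sup' f hkK
    simp [hgdef, sub_nonpos.mpr this]
  -- g ⬝ᵥ (L *ᵥ u) = 0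
  have h1 : g ⬝ᵥ (L *ᵥ u) = 0 := by
    unfold dotProduct
    apply Finset.sum_eq_zero
    intro i _
    rcases hc01 i with h | h
    · rw [hharm i h, mul_zero]
    · rw [hg0 i h, zero_mul]
  -- L kills constants
  have hLb : L *ᵥ (fun _ => b) = 0 := (hker _).mpr ⟨b, rfl⟩
  have h2 : L *ᵥ (fun i => u i - b) = L *ᵥ u := by
    have : (fun i => u i - b) = u - (fun _ => b) := rfl
    rw [this, mulVec_sub, hLb, sub_zero]
  -- key inequality
  have key : g ⬝ᵥ (L *ᵥ g) ≤ g ⬝ᵥ (L *ᵥ fun i => u i - b) := by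
    have hdiff : g ⬝ᵥ (L *ᵥ g) - g ⬝ᵥ (L *ᵥ fun i => u i - b)
        = ∑ i, ∑ j, g i * (L i j * (g j - (u j - b))) := by
      unfold dotProduct mulVec dotProduct
      rw [← Finset.sum_sub_distrib]
      refine Finset.sum_congr rfl fun i _ => ?_
      rw [← mul_sub, ← Finset.sum_sub_distrib, Finset.mul_sum]
      refine Finset.sum_congr rfl fun j _ => ?_
      ring
    have hterm : ∀ i ∈ Finset.univ, ∀ j ∈ Finset.univ,
        g i * (L i j * (g j - (u j - b))) ≤ 0 := by
      intro i _ j _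
      have hdj : 0 ≤ g j - (u j - b) := by
        simp [hgdef, le_max_left]
      by_cases hij : i = j
      · subst hij
        rcases le_or_gt (u i - b) 0 with h | h
        · have : g i = 0 := by simp [hgdef, max_eq_right h]
          rw [this, zero_mul]
        · have : g i - (u i - b) = 0 := by
            simp [hgdef, max_eq_left h.le]
          rw [this, mul_zero, mul_zero]
      · have := hoffdiag i j hij
        have : L i j * (g j - (u j - b)) ≤ 0 := mul_nonpos_of_nonpos_of_nonneg this hdj
        exact mul_nonpos_of_nonneg_of_nonpos (hgnn i) this
    have : g ⬝ᵥ (L *ᵥ g) - g ⬝ᵥ (L *ᵥ fun i => u i - b) ≤ 0 := by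
      rw [hdiff]
      exact Finset.sum_nonpos fun i hi => Finset.sum_nonpos (hterm i hi)
    linarith
  have hzero : g ⬝ᵥ (L *ᵥ g) = 0 := by
    have h3 : g ⬝ᵥ (L *ᵥ fun i => u i - b) = 0 := by rw [h2, h1]
    have := hpsd g
    linarith [key, h3]
  -- PosSemidef
  have hPSD : L.PosSemidef := by
    constructor
    · rw [Matrix.IsHermitian]
      ext i j
      simpa using congrFun (congrFun hsymm i) j
    · intro x
      simpa [Finsupp.sum_fintype, dotProduct, mulVec, Finset.mul_sum, mul_assoc] using hpsd x
  have hLg : L *ᵥ g = 0 := by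
    have := (hPSD.dotProduct_mulVec_zero_iff g).mp (by simpa using hzero)
    exact this
  obtain ⟨t, ht⟩ := (hker g).mp hLg
  obtain ⟨k, hkK⟩ := hKne
  have hck : c k = 1 := by
    rw [hK] at hkK; exact (Finset.mem_filter.mp hkK).2
  have ht0 : t = 0 := by
    have := hg0 k hck
    rw [ht] at this
    exact this
  intro i
  have hgi : g i = 0 := by rw [ht, ht0]
  have hle : u i - b ≤ g i := le_max_left _ _
  linarith

/-- Maximum–minimum principle for homogeneous diffusion inpainting: the
reconstruction `u` solving `(C + (I - C) L) u = C f` lies between the minimum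
and maximum of `f` over mask pixels.  `L` is the symmetric positive
semidefinite Laplacian of a connected graph: nonpositive off-diagonal entries,
zero row sums, and kernel spanned by the constant vector. -/
theorem inpainting_max_min_principle (N : ℕ)
    (L : Matrix (Fin N) (Fin N) ℝ)
    (hsymm : L.IsSymm)
    (hpsd : ∀ x : Fin N → ℝ, 0 ≤ x ⬝ᵥ (L *ᵥ x))
    (hoffdiag : ∀ i j, i ≠ j → L i j ≤ 0)
    (hrowsum : ∀ i, ∑ j, L i j = 0)
    (hker : ∀ x : Fin N → ℝ, L *ᵥ x = 0 ↔ ∃ t : ℝ, x = fun _ => t)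
    (c : Fin N → ℝ) (hc01 : ∀ i, c i = 0 ∨ c i = 1) (hc : c ≠ 0)
    (C : Matrix (Fin N) (Fin N) ℝ) (hC : C = Matrix.diagonal c)
    (f u : Fin N → ℝ)
    (hu : (C + (1 - C) * L) *ᵥ u = C *ᵥ f)
    (K : Finset (Fin N)) (hK : K = Finset.univ.filter (fun k => c k = 1))
    (hKne : K.Nonempty) :
    ∀ i, K.inf' hKne f ≤ u i ∧ u i ≤ K.sup' hKne f := by
  -- extract rowwise equations
  have hrow : ∀ i, c i * u i + ((L *ᵥ u) i - c i * (L *ᵥ u) i) = c i * f i := by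
    intro i
    have := congrFun hu i
    rw [add_mulVec, ← mulVec_mulVec, sub_mulVec, one_mulVec, hC] at this
    simp only [Pi.add_apply, Pi.sub_apply, mulVec_diagonal] at this
    exact this
  have hmask : ∀ i, c i = 1 → u i = f i := by
    intro i hi
    have := hrow i
    rw [hi] at this
    simpa using this
  have hharm : ∀ i, c i = 0 → (L *ᵥ u) i = 0 := by
    intro i hi
    have := hrow i
    rw [hi] at this
    simpa using this
  have hmaskneg : ∀ i, c i = 1 → (-u) i = (-f) i := by
    intro i hi; simp [hmask i hi]
  have hharmneg : ∀ i, c i = 0 → (L *ᵥ (-u)) i = 0 := by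
    intro i hi; rw [mulVec_neg]; simp [hharm i hi]
  have hup := inpainting_aux N L hsymm hpsd hoffdiag hker c hc01 f u hmask hharm K hK hKne
  have hdown := inpainting_aux N L hsymm hpsd hoffdiag hker c hc01 (-f) (-u)
    hmaskneg hharmneg K hK hKne
  intro i
  refine ⟨?_, hup i⟩
  have h1 : (-u) i ≤ K.sup' hKne (-f) := hdown i
  have h2 : K.sup' hKne (-f) = -(K.inf' hKne f) := by
    apply le_antisymm
    · apply Finset.sup'_le
      intro k hk
      simp only [Pi.neg_apply, neg_le_neg_iff]
      exact Finset.inf'_le f hk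
    · obtain ⟨k0, hk0, hk0eq⟩ := Finset.exists_mem_eq_inf' hKne f
      rw [hk0eq]
      exact Finset.le_sup' (-f) hk0
  rw [h2] at h1
  simp only [Pi.neg_apply] at h1
  linarith
end
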